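/- arXiv:1004.0778 — 2 statements merged into one kernel-verified Lean document; each statement's English description precedes it below -/
import Mathlib

section
/- Let R be a commutative ring and M a finitely generated projective R-module, realized as the image of an idempotent matrix e ∈ M_n(R). Then the categorical trace of an endomorphism f : M → M in the symmetric monoidal category of R-modules equals the matrix trace of any matrix F ∈ M_n(R) representing f (i.e. with eFe = F and F inducing f on the image of e). -/
open CategoryTheory MonoidalCategory

/-- The categorical trace of an endomorphism of a dualizable object. -/
noncomputable def catTrace {C : Type*} [Category C] [MonoidalCategory C] [SymmetricCategory C]
    (X : C) [HasRightDual X] (f : X ⟶ X) : 𝟙_ C ⟶ 𝟙_ C :=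
  η_ X Xᘁ ≫ f ▷ Xᘁ ≫ (β_ X Xᘁ).hom ≫ ε_ X Xᘁ

/-!
Write the coevaluation as `η 1 = ∑ xᵢ ⊗ φᵢ`. The zigzag identity says `m = ∑ φᵢ(m) • xᵢ`, so the
trace of the rank-one map `x ↦ φ(x) • c`, namely `∑ φ(xᵢ) φᵢ(c)`, is `φ(c)`. Since `F = e (F e)`,
the columns of `F` lie in `M`, and `f` is the sum over `k` of the rank-one maps `x ↦ x_k • F.col k`;
by additivity its trace is `∑ F k k`.
-/

open TensorProduct Matrix

theorem catTrace_sum {C : Type*} [Category C] [Preadditive C] [MonoidalCategory C]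
    [MonoidalPreadditive C] [SymmetricCategory C] (X : C) [HasRightDual X]
    {ι : Type*} (s : Finset ι) (f : ι → (X ⟶ X)) :
    catTrace X (∑ i ∈ s, f i) = ∑ i ∈ s, catTrace X (f i) := by
  simp only [catTrace, sum_whiskerRight, Preadditive.sum_comp, Preadditive.comp_sum]

namespace ModuleCat

variable {R : Type u} [CommRing R] (X : ModuleCat.{u} R) [HasRightDual X]

theorem sum_evaluation_smul_of_coevaluation_eq {S : Finset (X × (Xᘁ : ModuleCat R))}
    (hS : η_ X Xᘁ (1 : R) = ∑ p ∈ S, p.1 ⊗ₜ[R] p.2) (m : X) :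
    ∑ p ∈ S, ε_ X Xᘁ (p.2 ⊗ₜ[R] m) • p.1 = m := by
  have h := congr((ρ_ X).hom ($(ExactPairing.evaluation_coevaluation X Xᘁ) ((1 : R) ⊗ₜ[R] m)))
  simp only [comp_apply, MonoidalCategory.whiskerRight_apply, hS, sum_tmul, map_sum] at h
  exact h.trans (by simp)

theorem catTrace_apply_one {S : Finset (X × (Xᘁ : ModuleCat R))}
    (hS : η_ X Xᘁ (1 : R) = ∑ p ∈ S, p.1 ⊗ₜ[R] p.2) (f : X ⟶ X) :
    catTrace X f (1 : R) = ∑ p ∈ S, ε_ X Xᘁ (p.2 ⊗ₜ[R] f p.1) := by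
  simp only [catTrace, comp_apply, hS, map_sum]
  rfl

theorem catTrace_ofHom_smulRight (φ : X →ₗ[R] R) (c : X) :
    catTrace X (ofHom (φ.smulRight c)) = φ c • 𝟙 (𝟙_ (ModuleCat R)) := by
  obtain ⟨S, hS⟩ := TensorProduct.exists_finset (R := R) (η_ X Xᘁ (1 : R))
  ext
  rw [catTrace_apply_one X hS]
  conv_rhs => rw [← sum_evaluation_smul_of_coevaluation_eq X hS c]
  simp [tmul_smul, mul_comm]

end ModuleCat

theorem Matrix.col_mem_range_mulVecLin {R m n l : Type*} [CommSemiring R] [Fintype l]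
    [Fintype n] [DecidableEq n] {e : Matrix m l R} {G : Matrix l n R} {F : Matrix m n R}
    (h : e * G = F) (k : n) :
    F.col k ∈ LinearMap.range e.mulVecLin :=
  ⟨G *ᵥ Pi.single k 1, by rw [mulVecLin_apply, mulVec_mulVec, h, mulVec_single_one]⟩

theorem LinearMap.eq_sum_smulRight_col {R n : Type*} [CommSemiring R] [Fintype n]
    {M : Submodule R (n → R)} (f : M →ₗ[R] M) {F : Matrix n n R}
    (hFf : ∀ x : M, (f x : n → R) = F *ᵥ x) (hcol : ∀ k, F.col k ∈ M) :
    f = ∑ k, (LinearMap.proj k ∘ₗ M.subtype).smulRight ⟨F.col k, hcol k⟩ := by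
  ext x
  simp [hFf, mulVec_eq_sum]

theorem catTrace_eq_matrix_trace_general {R : Type} [CommRing R] (n : ℕ)
    (e : Matrix (Fin n) (Fin n) R)
    (M : Submodule R (Fin n → R)) (hM : M = LinearMap.range e.mulVecLin)
    (f : M →ₗ[R] M) (F : Matrix (Fin n) (Fin n) R)
    (hF : e * F * e = F)
    (hFf : ∀ x : M, (f x : Fin n → R) = F.mulVec (x : Fin n → R))
    [HasRightDual (ModuleCat.of R M)] :
    catTrace (ModuleCat.of R M) (ModuleCat.ofHom f) =
      F.trace • 𝟙 (𝟙_ (ModuleCat R)) := by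
  have hcol (k : Fin n) : F.col k ∈ M :=
    hM ▸ Matrix.col_mem_range_mulVecLin (G := F * e) (by rw [← Matrix.mul_assoc, hF]) k
  have hf : ModuleCat.ofHom f = ∑ k, ModuleCat.ofHom
      ((LinearMap.proj k ∘ₗ M.subtype).smulRight (⟨F.col k, hcol k⟩ : M)) := by
    ext x
    simp [LinearMap.eq_sum_smulRight_col f hFf hcol]
  rw [hf, catTrace_sum, Finset.sum_congr rfl fun k _ => ModuleCat.catTrace_ofHom_smulRight _ _ _]
  simp [trace, Finset.sum_smul]

theorem catTrace_eq_matrix_trace {R : Type} [CommRing R] (n : ℕ)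
    (e : Matrix (Fin n) (Fin n) R) (he : e * e = e)
    (M : Submodule R (Fin n → R)) (hM : M = LinearMap.range e.mulVecLin)
    (f : M →ₗ[R] M) (F : Matrix (Fin n) (Fin n) R)
    (hF : e * F * e = F)
    (hFf : ∀ x : M, (f x : Fin n → R) = F.mulVec (x : Fin n → R))
    [HasRightDual (ModuleCat.of R M)] :
    catTrace (ModuleCat.of R M) (ModuleCat.ofHom f) =
      F.trace • 𝟙 (𝟙_ (ModuleCat R)) :=
  catTrace_eq_matrix_trace_general n e M hM f F hF hFf
end

section
/- Let D be a k-linear rigid symmetric monoidal triangulated category (compatibly, in May's sense) that is idempotent complete, over an algebraically closed field k of characteristic zero, and let G be a finite group acting on a distinguished triangle X → Z → Y → X[1] (i.e. compatible actions on X, Z, Y making all three maps G-equivariant). Assume May's additivity: for every distinguished triangle A → C → B → A[1], tr(id_C) = tr(id_A) + tr(id_B). Then for every g ∈ G, tr(g_Z; Z) = tr(g_X; X) + tr(g_Y; Y). -/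
/-!
Both sides of the identity are `k`-linear in the element of `k[G]` acting, so it suffices to
treat idempotents `e ∈ k[G]` and to write `g` as a linear combination of idempotents: if `g` has
order `n` and `ζ` is a primitive `n`-th root of unity, then `g = ∑ ζ^j E_j` with the spectral
projectors `E_j = n⁻¹ ∑_m ζ^(-jm) g^m`.

For an idempotent endomorphism `e` of a distinguished triangle `T`, split `e` on the first two
objects and complete the restricted map to a distinguished triangle `S`. By TR3 and the five lemma
`S` is a retract of `T`, and the resulting idempotent `e'` of `T` agrees with `e` on the first two
objects. On the third object `e` and `e'` then differ by a square-zero map, which forces equal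
traces. May's additivity for `S` gives the identity for `e`.
-/

universe u

open CategoryTheory CategoryTheory.Limits CategoryTheory.Pretriangulated MonoidalCategory

section Trace

variable {C : Type*} [Category C] [MonoidalCategory C] [SymmetricCategory C]

theorem catTrace_comp_comm {X Y : C} [HasRightDual X] [HasRightDual Y] (f : X ⟶ Y) (g : Y ⟶ X) :
    catTrace X (f ≫ g) = catTrace Y (g ≫ f) :=
  calc η_ X Xᘁ ≫ (f ≫ g) ▷ Xᘁ ≫ (β_ X Xᘁ).hom ≫ ε_ X Xᘁ
      = η_ X Xᘁ ≫ f ▷ Xᘁ ≫ (β_ Y Xᘁ).hom ≫ Xᘁ ◁ g ≫ ε_ X Xᘁ := by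
        simp [BraidedCategory.braiding_naturality_left_assoc]
    _ = η_ X Xᘁ ≫ f ▷ Xᘁ ≫ (β_ Y Xᘁ).hom ≫ gᘁ ▷ Y ≫ ε_ Y Yᘁ := by
        rw [rightAdjointMate_comp_evaluation]
    _ = η_ X Xᘁ ≫ X ◁ gᘁ ≫ f ▷ Yᘁ ≫ (β_ Y Yᘁ).hom ≫ ε_ Y Yᘁ := by
        rw [← BraidedCategory.braiding_naturality_right_assoc, whisker_exchange_assoc]
    _ = η_ Y Yᘁ ≫ (g ≫ f) ▷ Yᘁ ≫ (β_ Y Yᘁ).hom ≫ ε_ Y Yᘁ := by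
        rw [coevaluation_comp_rightAdjointMate_assoc, comp_whiskerRight_assoc]

variable [Preadditive C] [MonoidalPreadditive C]

theorem catTrace_zero (X : C) [HasRightDual X] : catTrace X 0 = 0 := by
  simp [catTrace]

theorem catTrace_add {X : C} [HasRightDual X] (f g : X ⟶ X) :
    catTrace X (f + g) = catTrace X f + catTrace X g := by
  simp [catTrace, MonoidalPreadditive.add_whiskerRight]

theorem catTrace_smul {R : Type*} [Semiring R] [Linear R C] [MonoidalLinear R C]
    {X : C} [HasRightDual X] (r : R) (f : X ⟶ X) :
    catTrace X (r • f) = r • catTrace X f := by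
  simp [catTrace]

@[simps]
noncomputable def catTraceLinearMap (R : Type*) [Semiring R] [Linear R C] [MonoidalLinear R C]
    (X : C) [HasRightDual X] : (X ⟶ X) →ₗ[R] (𝟙_ C ⟶ 𝟙_ C) where
  toFun := catTrace X
  map_add' := catTrace_add
  map_smul' := catTrace_smul

theorem catTrace_eq_of_sub_comp_self_eq_zero {X : C} [HasRightDual X] {p q : X ⟶ X}
    (hp : p ≫ p = p) (hq : q ≫ q = q) (hpq : (q - p) ≫ (q - p) = 0) :
    catTrace X q = catTrace X p := by
  set d := q - p with hd
  have hq' : q = p + d := by rw [hd, add_sub_cancel]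
  have hsum : p ≫ d + d ≫ p = d := by
    have := hq
    rw [hq', Preadditive.add_comp, Preadditive.comp_add, Preadditive.comp_add, hp, hpq, add_zero,
      add_assoc] at this
    exact add_left_cancel this
  have hpdp : p ≫ d ≫ p = 0 := by
    have := congrArg (fun f => p ≫ f ≫ p) hsum
    simp only [Preadditive.add_comp, Preadditive.comp_add, Category.assoc, hp,
      reassoc_of% hp] at this
    exact left_eq_add.mp this.symm
  have hdp : catTrace X (d ≫ p) = 0 :=
    calc catTrace X (d ≫ p) = catTrace X ((d ≫ p) ≫ p) := by rw [Category.assoc, hp]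
      _ = catTrace X (p ≫ d ≫ p) := catTrace_comp_comm _ _
      _ = 0 := by rw [hpdp, catTrace_zero]
  rw [hq', catTrace_add, ← hsum, catTrace_add, catTrace_comp_comm, hdp, add_zero, add_zero]

end Trace

namespace CategoryTheory.Pretriangulated

variable {C : Type*} [Category C] [Preadditive C] [HasZeroObject C] [HasShift C ℤ]
  [∀ n : ℤ, (CategoryTheory.shiftFunctor C n).Additive] [Pretriangulated C]

theorem Triangle.comp_eq_zero_of_comp_mor₃_of_mor₂_comp {T : Triangle C} (hT : T ∈ distTriang C)
    {X Y : C} {f : X ⟶ T.obj₃} {g : T.obj₃ ⟶ Y} (hf : f ≫ T.mor₃ = 0) (hg : T.mor₂ ≫ g = 0) :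
    f ≫ g = 0 := by
  obtain ⟨u, rfl⟩ := Triangle.coyoneda_exact₃ T hT f hf
  rw [Category.assoc, hg, Limits.comp_zero]

theorem Triangle.hom₃_comp_hom₃_eq_zero {T : Triangle C} (hT : T ∈ distTriang C) (d : T ⟶ T)
    (h₁ : d.hom₁ = 0) (h₂ : d.hom₂ = 0) : d.hom₃ ≫ d.hom₃ = 0 :=
  Triangle.comp_eq_zero_of_comp_mor₃_of_mor₂_comp hT
    (by rw [← d.comm₃, h₁, Functor.map_zero, Limits.comp_zero])
    (by rw [d.comm₂, h₂, Limits.zero_comp])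

theorem Triangle.exists_retraction_of_comp_hom₁_hom₂_eq_id {S T : Triangle C}
    (hS : S ∈ distTriang C) (i : S ⟶ T) (r : T ⟶ S) (h₁ : (i ≫ r).hom₁ = 𝟙 _)
    (h₂ : (i ≫ r).hom₂ = 𝟙 _) :
    ∃ r' : T ⟶ S, i ≫ r' = 𝟙 S ∧ r'.hom₁ = r.hom₁ ∧ r'.hom₂ = r.hom₂ := by
  have : IsIso (i ≫ r) := by
    have h₁' : IsIso (i ≫ r).hom₁ := by rw [h₁]; infer_instance
    have h₂' : IsIso (i ≫ r).hom₂ := by rw [h₂]; infer_instance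
    exact Triangle.isIso_of_isIsos _ h₁' h₂' (isIso₃_of_isIso₁₂ _ hS hS h₁' h₂')
  have hinv₁ : (inv (i ≫ r)).hom₁ = 𝟙 _ := by
    simpa only [asIso_hom, asIso_inv, h₁, Category.id_comp] using
      (asIso (i ≫ r)).hom_inv_id_triangle_hom₁
  have hinv₂ : (inv (i ≫ r)).hom₂ = 𝟙 _ := by
    simpa only [asIso_hom, asIso_inv, h₂, Category.id_comp] using
      (asIso (i ≫ r)).hom_inv_id_triangle_hom₂
  refine ⟨r ≫ inv (i ≫ r), (Category.assoc _ _ _).symm.trans (IsIso.hom_inv_id _), ?_, ?_⟩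
  · rw [comp_hom₁, hinv₁, Category.comp_id]
  · rw [comp_hom₂, hinv₂, Category.comp_id]

theorem Triangle.exists_retract_of_idempotent [IsIdempotentComplete C] {T : Triangle C}
    (hT : T ∈ distTriang C) (e : T ⟶ T) (he : e ≫ e = e) :
    ∃ (S : Triangle C) (i : S ⟶ T) (r : T ⟶ S), S ∈ distTriang C ∧ i ≫ r = 𝟙 S ∧
      (r ≫ i).hom₁ = e.hom₁ ∧ (r ≫ i).hom₂ = e.hom₂ := by
  obtain ⟨A, iA, rA, hA, hrA⟩ := IsIdempotentComplete.idempotents_split T.obj₁ e.hom₁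
    (by rw [← comp_hom₁, he])
  obtain ⟨B, iB, rB, hB, hrB⟩ := IsIdempotentComplete.idempotents_split T.obj₂ e.hom₂
    (by rw [← comp_hom₂, he])
  obtain ⟨W, g, h, hS⟩ := distinguished_cocone_triangle (iA ≫ T.mor₁ ≫ rB)
  have comm_i : (iA ≫ T.mor₁ ≫ rB) ≫ iB = iA ≫ T.mor₁ := by
    rw [Category.assoc, Category.assoc, hrB, e.comm₁, ← hrA, Category.assoc, reassoc_of% hA]
  have comm_r : T.mor₁ ≫ rB = rA ≫ iA ≫ T.mor₁ ≫ rB := by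
    rw [← Category.assoc rA, hrA, ← e.comm₁_assoc, ← hrB, Category.assoc, hB, Category.comp_id]
  let i := completeDistinguishedTriangleMorphism _ T hS hT iA iB comm_i
  let r := completeDistinguishedTriangleMorphism T _ hT hS rA rB comm_r
  obtain ⟨r', hir', hr₁, hr₂⟩ :=
    Triangle.exists_retraction_of_comp_hom₁_hom₂_eq_id hS i r hA hB
  refine ⟨_, i, r', hS, hir', ?_, ?_⟩
  · rw [comp_hom₁, hr₁]; exact hrA
  · rw [comp_hom₂, hr₂]; exact hrB

end CategoryTheory.Pretriangulated

section IdempotentAdditivity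

variable {C : Type*} [Category C] [Preadditive C] [MonoidalCategory C] [SymmetricCategory C]
  [MonoidalPreadditive C] [HasZeroObject C] [HasShift C ℤ] [∀ n : ℤ, (shiftFunctor C n).Additive]
  [Pretriangulated C] [∀ X : C, HasRightDual X]

theorem catTrace_hom₃_eq_of_idempotent {T : Triangle C} (hT : T ∈ distTriang C) {e e' : T ⟶ T}
    (he : e ≫ e = e) (he' : e' ≫ e' = e') (h₁ : e'.hom₁ = e.hom₁) (h₂ : e'.hom₂ = e.hom₂) :
    catTrace T.obj₃ e'.hom₃ = catTrace T.obj₃ e.hom₃ :=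
  catTrace_eq_of_sub_comp_self_eq_zero (by rw [← comp_hom₃, he]) (by rw [← comp_hom₃, he'])
    (Triangle.hom₃_comp_hom₃_eq_zero hT (e' - e) (sub_eq_zero.mpr h₁) (sub_eq_zero.mpr h₂))

theorem catTrace_hom₂_eq_add_of_idempotent [IsIdempotentComplete C]
    (may : ∀ T ∈ distTriang C,
      catTrace T.obj₂ (𝟙 T.obj₂) = catTrace T.obj₁ (𝟙 T.obj₁) + catTrace T.obj₃ (𝟙 T.obj₃))
    {T : Triangle C} (hT : T ∈ distTriang C) (e : T ⟶ T) (he : e ≫ e = e) :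
    catTrace T.obj₂ e.hom₂ = catTrace T.obj₁ e.hom₁ + catTrace T.obj₃ e.hom₃ := by
  obtain ⟨S, i, r, hS, hir, h₁, h₂⟩ := Triangle.exists_retract_of_idempotent hT e he
  have hri : (r ≫ i) ≫ (r ≫ i) = r ≫ i := by rw [Category.assoc, reassoc_of% hir]
  have tr₁ : catTrace _ (r ≫ i).hom₁ = catTrace _ (𝟙 S.obj₁) := by
    rw [comp_hom₁, catTrace_comp_comm, ← comp_hom₁, hir, id_hom₁]
  have tr₂ : catTrace _ (r ≫ i).hom₂ = catTrace _ (𝟙 S.obj₂) := by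
    rw [comp_hom₂, catTrace_comp_comm, ← comp_hom₂, hir, id_hom₂]
  have tr₃ : catTrace _ (r ≫ i).hom₃ = catTrace _ (𝟙 S.obj₃) := by
    rw [comp_hom₃, catTrace_comp_comm, ← comp_hom₃, hir, id_hom₃]
  rw [← h₁, ← h₂, ← catTrace_hom₃_eq_of_idempotent hT he hri h₁ h₂, tr₁, tr₂, tr₃]
  exact may S hS

end IdempotentAdditivity

section EigenProjector

open Finset

variable {k R : Type*} [Field k] [Ring R] [Algebra k R]

noncomputable def eigenProjector (n : ℕ) (ω : k) (x : R) : R :=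
  (n : k)⁻¹ • ∑ m ∈ range n, ω⁻¹ ^ m • x ^ m

theorem mul_eigenProjector {n : ℕ} {ω : k} {x : R} (hω : ω ^ n = 1) (hω₀ : ω ≠ 0)
    (hx : x ^ n = 1) : x * eigenProjector n ω x = ω • eigenProjector n ω x := by
  set f : ℕ → R := fun m => ω⁻¹ ^ m • x ^ m
  have hshift : ∑ m ∈ range n, f (m + 1) = ∑ m ∈ range n, f m := by
    have h := (sum_range_succ' f n).symm.trans (sum_range_succ f n)
    rwa [show f n = f 0 by simp [f, inv_pow, hω, hx], add_left_inj] at h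
  have hstep : ∀ m, x * f m = ω • f (m + 1) := fun m => by
    rw [mul_smul_comm, ← pow_succ', smul_smul, pow_succ' ω⁻¹, ← mul_assoc, mul_inv_cancel₀ hω₀,
      one_mul]
  calc x * eigenProjector n ω x = (n : k)⁻¹ • ∑ m ∈ range n, x * f m := by
        rw [eigenProjector, mul_smul_comm, mul_sum]
    _ = (n : k)⁻¹ • ∑ m ∈ range n, ω • f (m + 1) := by simp_rw [hstep]
    _ = ω • eigenProjector n ω x := by rw [← smul_sum, hshift, smul_comm]; rfl

theorem pow_mul_eigenProjector {n : ℕ} {ω : k} {x : R} (hω : ω ^ n = 1) (hω₀ : ω ≠ 0)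
    (hx : x ^ n = 1) (m : ℕ) : x ^ m * eigenProjector n ω x = ω ^ m • eigenProjector n ω x := by
  induction m with
  | zero => simp
  | succ m ih =>
    rw [pow_succ, mul_assoc, mul_eigenProjector hω hω₀ hx, mul_smul_comm, ih, smul_smul, pow_succ']

theorem isIdempotentElem_eigenProjector {n : ℕ} (hn : (n : k) ≠ 0) {ω : k} {x : R}
    (hω : ω ^ n = 1) (hx : x ^ n = 1) : IsIdempotentElem (eigenProjector n ω x) := by
  have hω₀ : ω ≠ 0 := (IsUnit.of_pow_eq_one hω (by rintro rfl; exact hn Nat.cast_zero)).ne_zero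
  have hexpand : ∀ y : R,
      eigenProjector n ω x * y = (n : k)⁻¹ • ∑ m ∈ range n, ω⁻¹ ^ m • (x ^ m * y) := fun y => by
    simp only [eigenProjector, smul_mul_assoc, sum_mul]
  rw [IsIdempotentElem, hexpand]
  simp only [pow_mul_eigenProjector hω hω₀ hx, smul_smul, ← mul_pow, inv_mul_cancel₀ hω₀,
    one_pow, one_smul, sum_const, card_range, ← Nat.cast_smul_eq_nsmul k]
  rw [inv_mul_cancel₀ hn, one_smul]

theorem sum_eigenProjector {n : ℕ} [NeZero n] {ζ : k} (hζ : IsPrimitiveRoot ζ n) (x : R) :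
    ∑ j ∈ range n, eigenProjector n (ζ ^ j) x = 1 := by
  have hgeom : ∀ m ∈ range n, m ≠ 0 → (∑ j ∈ range n, (ζ⁻¹ ^ m) ^ j) • x ^ m = 0 :=
    fun m hm hm₀ => by
      rw [geom_sum_eq (hζ.inv.pow_ne_one_of_pos_of_lt hm₀ (mem_range.mp hm)), ← pow_mul,
        mul_comm, pow_mul, hζ.inv.pow_eq_one, one_pow, sub_self, zero_div, zero_smul]
  calc ∑ j ∈ range n, eigenProjector n (ζ ^ j) x
      = (n : k)⁻¹ • ∑ m ∈ range n, (∑ j ∈ range n, (ζ⁻¹ ^ m) ^ j) • x ^ m := by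
        simp only [eigenProjector, ← smul_sum, sum_smul]
        rw [sum_comm]
        congr 1
        refine sum_congr rfl fun m _ => sum_congr rfl fun j _ => ?_
        rw [inv_pow, inv_pow, inv_pow, ← pow_mul, ← pow_mul, mul_comm]
    _ = (n : k)⁻¹ • (n : k) • 1 := by
        rw [sum_eq_single_of_mem 0 (mem_range.mpr (NeZero.pos n)) hgeom]
        simp
    _ = 1 := by rw [smul_smul, inv_mul_cancel₀ hζ.neZero'.out, one_smul]

theorem mem_span_isIdempotentElem_of_pow_eq_one {n : ℕ} [NeZero n] {ζ : k}
    (hζ : IsPrimitiveRoot ζ n) {x : R} (hx : x ^ n = 1) :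
    x ∈ Submodule.span k {e : R | IsIdempotentElem e} := by
  have hroot : ∀ j, (ζ ^ j) ^ n = 1 := fun j => by
    rw [← pow_mul, mul_comm, pow_mul, hζ.pow_eq_one, one_pow]
  have hdecomp : x = ∑ j ∈ range n, ζ ^ j • eigenProjector n (ζ ^ j) x := by
    conv_lhs => rw [← mul_one x, ← sum_eigenProjector hζ x, mul_sum]
    exact sum_congr rfl fun j _ =>
      mul_eigenProjector (hroot j) (pow_ne_zero _ (hζ.ne_zero (NeZero.ne n))) hx
  rw [hdecomp]
  exact Submodule.sum_mem _ fun j _ => Submodule.smul_mem _ _ <| Submodule.subset_span <|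
    isIdempotentElem_eigenProjector hζ.neZero'.out (hroot j) hx

end EigenProjector

theorem equivariant_additivity_of_traces
    {k : Type u} [Field k] [IsAlgClosed k] [CharZero k]
    {D : Type*} [Category D] [Preadditive D] [CategoryTheory.Linear k D]
    [MonoidalCategory D] [SymmetricCategory D] [MonoidalPreadditive D] [MonoidalLinear k D]
    [HasZeroObject D] [HasShift D ℤ] [∀ n : ℤ, (shiftFunctor D n).Additive] [Pretriangulated D]
    [IsIdempotentComplete D] [∀ X : D, HasRightDual X]
    -- May's additivity of traces of identities over distinguished triangles
    (may : ∀ T ∈ distTriang D,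
      catTrace T.obj₂ (𝟙 T.obj₂) = catTrace T.obj₁ (𝟙 T.obj₁) + catTrace T.obj₃ (𝟙 T.obj₃))
    {G : Type u} [Group G] [Fintype G]
    {X Z Y : D} (a : X ⟶ Z) (b : Z ⟶ Y) (c : Y ⟶ X⟦(1 : ℤ)⟧)
    (hT : Triangle.mk a b c ∈ distTriang D)
    (ρX : MonoidAlgebra k G →ₐ[k] End X)
    (ρZ : MonoidAlgebra k G →ₐ[k] End Z)
    (ρY : MonoidAlgebra k G →ₐ[k] End Y)
    (ha : ∀ r, (ρX r : X ⟶ X) ≫ a = a ≫ (ρZ r : Z ⟶ Z))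
    (hb : ∀ r, (ρZ r : Z ⟶ Z) ≫ b = b ≫ (ρY r : Y ⟶ Y))
    (hc : ∀ r, (ρY r : Y ⟶ Y) ≫ c = c ≫ (shiftFunctor D (1 : ℤ)).map (ρX r : X ⟶ X)) :
    ∀ g : G, catTrace Z (ρZ (MonoidAlgebra.of k G g) : Z ⟶ Z) =
      catTrace X (ρX (MonoidAlgebra.of k G g) : X ⟶ X) +
        catTrace Y (ρY (MonoidAlgebra.of k G g) : Y ⟶ Y) := by
  intro g
  have : NeZero (orderOf g) := ⟨(orderOf_pos g).ne'⟩
  obtain ⟨ζ, hζ⟩ := HasEnoughRootsOfUnity.exists_primitiveRoot k (orderOf g)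
  let defect : MonoidAlgebra k G →ₗ[k] (𝟙_ D ⟶ 𝟙_ D) :=
    catTraceLinearMap k Z ∘ₗ ρZ.toLinearMap - catTraceLinearMap k X ∘ₗ ρX.toLinearMap -
      catTraceLinearMap k Y ∘ₗ ρY.toLinearMap
  have hdefect : ∀ r, r ∈ LinearMap.ker defect ↔
      catTrace Z (ρZ r) = catTrace X (ρX r) + catTrace Y (ρY r) := fun r => by
    simp only [defect, LinearMap.mem_ker, LinearMap.sub_apply, LinearMap.add_apply,
      LinearMap.comp_apply, AlgHom.toLinearMap_apply, catTraceLinearMap_apply, sub_sub,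
      sub_eq_zero]
  have hidem : Submodule.span k {e | IsIdempotentElem e} ≤ LinearMap.ker defect := by
    refine Submodule.span_le.mpr fun e he => (hdefect e).mpr ?_
    let ρ : Triangle.mk a b c ⟶ Triangle.mk a b c :=
      Triangle.homMk _ _ (ρX e) (ρZ e) (ρY e) (ha e).symm (hb e).symm (hc e).symm
    exact catTrace_hom₂_eq_add_of_idempotent may hT ρ
      (Triangle.hom_ext _ _ (he.map ρX).eq (he.map ρZ).eq (he.map ρY).eq)
  have hg : MonoidAlgebra.of k G g ^ orderOf g = 1 := by
    rw [← map_pow, pow_orderOf_eq_one, map_one]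
  exact (hdefect _).mp (hidem (mem_span_isIdempotentElem_of_pow_eq_one hζ hg))
end
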